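/- (Eq. (13)) Under the hypotheses of the higher-order parameter shift formula — C : (Fin M → ℝ) → ℝ of trigonometric form a + b·cos t + c·sin t in each coordinate, multiplicities N : Fin M → ℕ with |α| = Σ_l N(l), and an additional coordinate i — the (|α|+1)-th order derivative satisfies ∂ᵢ( ∂₁^{N(1)} ⋯ ∂_M^{N(M)} C )(θ) = 2^{−|α|} · Σ_{ω} ( Π_l d(ω(l), N(l)) ) · ∂ᵢC(θ + π·ω), where the sum runs over all functions ω assigning to each l a shift in the support for N(l), and d are the Pascal-tree coefficients (d(0,0) = 1; d(±1/2,1) = ±1; for even N ≥ 2, d(0,N) = (−1)^{N/2}·2^{N−1}, d(±1,N) = (−1)^{(N−2)/2}·2^{N−2}; for odd N ≥ 3, d(±1/2,N) = ±(−1)^{(N−1)/2}·3·2^{N−3}, d(±3/2,N) = ∓(−1)^{(N−1)/2}·2^{N−3}). -/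

import Mathlib

/-- The Pascal-tree coefficients `d(ω, N)`. -/
def pascalD (ω : ℚ) (N : ℕ) : ℤ :=
  if N = 0 then (if ω = 0 then 1 else 0)
  else if N = 1 then (if ω = 1/2 then 1 else if ω = -1/2 then -1 else 0)
  else if N % 2 = 0 then
    (if ω = 0 then (-1) ^ (N / 2) * 2 ^ (N - 1)
     else if ω = 1 ∨ ω = -1 then (-1) ^ ((N - 2) / 2) * 2 ^ (N - 2)
     else 0)
  else
    (if ω = 1/2 then (-1) ^ ((N - 1) / 2) * 3 * 2 ^ (N - 3)
     else if ω = -1/2 then -((-1) ^ ((N - 1) / 2) * 3 * 2 ^ (N - 3))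
     else if ω = 3/2 then -((-1) ^ ((N - 1) / 2) * 2 ^ (N - 3))
     else if ω = -3/2 then (-1) ^ ((N - 1) / 2) * 2 ^ (N - 3)
     else 0)

/-- The support of the Pascal-tree coefficients at order `N`. -/
def pascalSupport (N : ℕ) : Finset ℚ :=
  if N = 0 then {0}
  else if N = 1 then {1/2, -1/2}
  else if N % 2 = 0 then {0, 1, -1}
  else {1/2, -1/2, 3/2, -3/2}

/-- Partial derivative of `C` with respect to the `i`-th coordinate. -/
noncomputable def pderiv' {M : ℕ} (i : Fin M) (C : (Fin M → ℝ) → ℝ) : (Fin M → ℝ) → ℝ :=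
  fun θ => deriv (fun t => C (Function.update θ i t)) (θ i)

/-- The iterated mixed partial derivative `∂₁^{N 1} ⋯ ∂_M^{N M} C`. -/
noncomputable def pdMulti {M : ℕ} (N : Fin M → ℕ) (C : (Fin M → ℝ) → ℝ) : (Fin M → ℝ) → ℝ :=
  (List.finRange M).foldr (fun i f => (pderiv' i)^[N i] f) C

/-!
For `φ t = a + b cos t + c sin t` and `n ≥ 1`, `φ⁽ⁿ⁾ t = b cos (t + nπ/2) + c sin (t + nπ/2)`, and the
Pascal-tree combination `2⁻ⁿ Σ_ω d(ω, n) φ (t + πω)` reproduces this in each of the cases `n = 0`,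
`n = 1`, `n` even, `n` odd. Functions of this form in every coordinate form a submodule that is
stable under translations, so the one-variable rule applies coordinate after coordinate: the
coefficients multiply and the shifts add. Finally `∂ᵢ` commutes with translations and finite linear
combinations of such functions.
-/

open Real Function Finset

lemma sum_pascalSupport_zero (F : ℚ → ℝ) :
    ∑ ω ∈ pascalSupport 0, (pascalD ω 0 : ℝ) * F ω = F 0 := by
  simp [pascalSupport, pascalD]

lemma sum_pascalSupport_one (F : ℚ → ℝ) :
    ∑ ω ∈ pascalSupport 1, (pascalD ω 1 : ℝ) * F ω = F (1 / 2) - F (-1 / 2) := by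
  norm_num [pascalSupport, pascalD]
  ring

lemma sum_pascalSupport_even (k : ℕ) (F : ℚ → ℝ) :
    ∑ ω ∈ pascalSupport (2 * k + 2), (pascalD ω (2 * k + 2) : ℝ) * F ω
      = (-1) ^ k * 2 ^ (2 * k) * (F 1 + F (-1) - 2 * F 0) := by
  have hN : 2 * k + 2 ≠ 0 ∧ 2 * k + 2 ≠ 1 ∧ (2 * k + 2) % 2 = 0 ∧ (2 * k + 2) / 2 = k + 1 ∧
      (2 * k + 2 - 2) / 2 = k := by omega
  norm_num [pascalSupport, pascalD, hN]
  ring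

lemma sum_pascalSupport_odd (k : ℕ) (F : ℚ → ℝ) :
    ∑ ω ∈ pascalSupport (2 * k + 3), (pascalD ω (2 * k + 3) : ℝ) * F ω
      = (-1) ^ (k + 1) * 2 ^ (2 * k) *
          (3 * (F (1 / 2) - F (-1 / 2)) - (F (3 / 2) - F (-3 / 2))) := by
  have hN : 2 * k + 3 ≠ 0 ∧ 2 * k + 3 ≠ 1 ∧ (2 * k + 3) % 2 ≠ 0 ∧ (2 * k + 3 - 1) / 2 = k + 1 := by
    omega
  norm_num [pascalSupport, pascalD, hN]
  ring

-- The `0 +` keeps the derivative in the shape of its argument, so that it can be iterated.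
lemma deriv_trig (a b c s : ℝ) :
    deriv (fun t => a + b * cos (t + s) + c * sin (t + s))
      = fun t => 0 + b * cos (t + (s + π / 2)) + c * sin (t + (s + π / 2)) := by
  funext t
  have hcos := ((hasDerivAt_cos (t + s)).comp_add_const t s).const_mul b
  have hsin := ((hasDerivAt_sin (t + s)).comp_add_const t s).const_mul c
  refine (((hasDerivAt_const t a).add hcos).add hsin).congr_deriv ?_ |>.deriv
  rw [← add_assoc, cos_add_pi_div_two, sin_add_pi_div_two]

lemma iterate_succ_deriv_trig (a b c s : ℝ) (n : ℕ) :
    deriv^[n + 1] (fun t => a + b * cos (t + s) + c * sin (t + s))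
      = fun t => 0 + b * cos (t + (s + (n + 1) * (π / 2)))
          + c * sin (t + (s + (n + 1) * (π / 2))) := by
  induction n generalizing a s with
  | zero => simp [deriv_trig]
  | succ n ih =>
    rw [iterate_succ_apply, deriv_trig, ih]
    funext t
    push_cast
    ring_nf

lemma iterate_deriv_trig_eq_pascal (a b c : ℝ) (n : ℕ) (t : ℝ) :
    deriv^[n] (fun t => a + b * cos t + c * sin t) t
      = 1 / 2 ^ n * ∑ ω ∈ pascalSupport n,
          (pascalD ω n : ℝ) * (a + b * cos (t + π * ω) + c * sin (t + π * ω)) := by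
  have hφ : (fun t => a + b * cos t + c * sin t)
      = fun t => a + b * cos (t + 0) + c * sin (t + 0) := by simp
  match n with
  | 0 => simp [sum_pascalSupport_zero]
  | 1 =>
    rw [hφ, iterate_succ_deriv_trig, sum_pascalSupport_one]
    push_cast
    rw [show t + (0 + (0 + 1) * (π / 2)) = t + π / 2 by ring,
      show t + π * (1 / 2) = t + π / 2 by ring, show t + π * (-1 / 2) = t - π / 2 by ring]
    simp only [cos_add_pi_div_two, sin_add_pi_div_two, cos_sub_pi_div_two, sin_sub_pi_div_two]
    ring
  | n + 2 =>
    obtain ⟨k, rfl | rfl⟩ := Nat.even_or_odd' n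
    · rw [hφ, iterate_succ_deriv_trig, sum_pascalSupport_even]
      push_cast
      rw [show t + (0 + (2 * k + 1 + 1) * (π / 2)) = t + (k + 1 : ℕ) * π by push_cast; ring,
        show t + π * 1 = t + π by ring, show t + π * -1 = t - π by ring,
        show t + π * 0 = t by ring]
      simp only [cos_add_nat_mul_pi, sin_add_nat_mul_pi, cos_add_pi, sin_add_pi, cos_sub_pi,
        sin_sub_pi]
      field_simp
      ring
    · rw [show 2 * k + 1 + 2 = 2 * k + 3 by ring, hφ, iterate_succ_deriv_trig,
        sum_pascalSupport_odd]
      push_cast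
      rw [show t + (0 + (2 * k + 2 + 1) * (π / 2)) = t + π / 2 + (k + 1 : ℕ) * π by
          push_cast; ring,
        show t + π * (1 / 2) = t + π / 2 by ring, show t + π * (-1 / 2) = t - π / 2 by ring,
        show t + π * (3 / 2) = t + π / 2 + π by ring,
        show t + π * (-3 / 2) = t - π / 2 - π by ring]
      simp only [cos_add_nat_mul_pi, sin_add_nat_mul_pi, cos_add_pi, sin_add_pi, cos_sub_pi,
        sin_sub_pi, cos_add_pi_div_two, sin_add_pi_div_two, cos_sub_pi_div_two,
        sin_sub_pi_div_two]
      field_simp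
      ring

@[to_additive]
lemma Finset.prod_update_univ_of_eq_one {ι β : Type*} [Fintype ι] [DecidableEq ι] [CommMonoid β]
    {g : ι → β} {a : ι} (ha : g a = 1) (y : β) :
    ∏ l, update g a y l = y * ∏ l, g l := by
  rw [prod_update_of_mem (mem_univ a), sdiff_singleton_eq_erase, prod_erase _ ha]

lemma Finset.sum_piFinset_update_of_eq_singleton {ι β γ : Type*} [Fintype ι] [DecidableEq ι]
    [DecidableEq β] [AddCommMonoid γ] {S : ι → Finset β} {a : ι} {z : β} (hz : S a = {z})
    (T : Finset β) (F : (ι → β) → γ) :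
    ∑ ω ∈ Fintype.piFinset (update S a T), F ω
      = ∑ x ∈ T, ∑ ω ∈ Fintype.piFinset S, F (update ω a x) := by
  rw [← sum_product']
  refine (sum_nbij' (fun p => update p.2 a p.1) (fun ω => (ω a, update ω a z)) ?_ ?_ ?_ ?_ ?_).symm
  · rintro ⟨x, ω⟩ h
    simp only [mem_product, Fintype.mem_piFinset] at h ⊢
    intro l
    rcases eq_or_ne l a with rfl | hl
    · simpa using h.1
    · simpa [hl] using h.2 l
  · intro ω h
    simp only [mem_product, Fintype.mem_piFinset] at h ⊢
    refine ⟨by simpa using h a, fun l => ?_⟩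
    rcases eq_or_ne l a with rfl | hl
    · simp [hz]
    · simpa [hl] using h l
  · rintro ⟨x, ω⟩ h
    simp only [mem_product, Fintype.mem_piFinset] at h
    have hωa : ω a = z := by simpa [hz] using h.2 a
    simp [← hωa]
  · intro ω _
    simp
  · intros
    rfl

variable {M : ℕ}

def coordTrig (M : ℕ) : Submodule ℝ ((Fin M → ℝ) → ℝ) where
  carrier := {f | ∀ (l : Fin M) (θ : Fin M → ℝ), ∃ a b c : ℝ, ∀ t : ℝ,
    f (update θ l t) = a + b * cos t + c * sin t}
  add_mem' := by
    rintro f g hf hg l θ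
    obtain ⟨a, b, c, h⟩ := hf l θ
    obtain ⟨a', b', c', h'⟩ := hg l θ
    exact ⟨a + a', b + b', c + c', fun t => by simp only [Pi.add_apply, h, h']; ring⟩
  zero_mem' := fun _ _ => ⟨0, 0, 0, fun _ => by simp⟩
  smul_mem' := by
    rintro r f hf l θ
    obtain ⟨a, b, c, h⟩ := hf l θ
    exact ⟨r * a, r * b, r * c, fun t => by simp only [Pi.smul_apply, smul_eq_mul, h]; ring⟩

lemma update_add_eq_update_add (θ v : Fin M → ℝ) (l : Fin M) (t : ℝ) :
    update θ l t + v = update (θ + v) l (t + v l) := by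
  rw [update_add, update_eq_self]

namespace coordTrig

variable {f : (Fin M → ℝ) → ℝ}

lemma comp_add_const_mem (hf : f ∈ coordTrig M) (v : Fin M → ℝ) :
    (fun θ => f (θ + v)) ∈ coordTrig M := by
  intro l θ
  obtain ⟨a, b, c, h⟩ := hf l (θ + v)
  refine ⟨a, b * cos (v l) + c * sin (v l), c * cos (v l) - b * sin (v l), fun t => ?_⟩
  simp only [update_add_eq_update_add, h, cos_add, sin_add]
  ring

lemma sum_mul_comp_add_mem {ι : Type*} (hf : f ∈ coordTrig M) (s : Finset ι) (c : ι → ℝ)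
    (v : ι → Fin M → ℝ) :
    (fun θ => ∑ x ∈ s, c x * f (θ + v x)) ∈ coordTrig M := by
  convert Submodule.sum_mem (coordTrig M) (t := s) fun x _ =>
    Submodule.smul_mem _ (c x) (comp_add_const_mem hf (v x)) using 1
  ext θ
  simp [Finset.sum_apply]

lemma differentiable_update (hf : f ∈ coordTrig M) (θ : Fin M → ℝ) (l : Fin M) :
    Differentiable ℝ (fun t => f (update θ l t)) := by
  obtain ⟨a, b, c, h⟩ := hf l θ
  simp only [h]
  fun_prop

end coordTrig

lemma pderiv'_apply_update (f : (Fin M → ℝ) → ℝ) (θ : Fin M → ℝ) (l : Fin M) (t : ℝ) :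
    pderiv' l f (update θ l t) = deriv (fun s => f (update θ l s)) t := by
  simp [pderiv']

lemma iterate_pderiv'_apply (f : (Fin M → ℝ) → ℝ) (l : Fin M) (n : ℕ) (θ : Fin M → ℝ) :
    (pderiv' l)^[n] f θ = deriv^[n] (fun t => f (update θ l t)) (θ l) := by
  induction n generalizing f with
  | zero => simp
  | succ n ih => simp only [iterate_succ_apply, ih, pderiv'_apply_update]

lemma iterate_pderiv'_eq_pascal {f : (Fin M → ℝ) → ℝ} (hf : f ∈ coordTrig M) (l : Fin M)
    (n : ℕ) (θ : Fin M → ℝ) :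
    (pderiv' l)^[n] f θ
      = 1 / 2 ^ n * ∑ x ∈ pascalSupport n, (pascalD x n : ℝ) * f (update θ l (θ l + π * x)) := by
  obtain ⟨a, b, c, h⟩ := hf l θ
  simp only [iterate_pderiv'_apply, h, iterate_deriv_trig_eq_pascal]

lemma hasDerivAt_update_add {f : (Fin M → ℝ) → ℝ} (hf : f ∈ coordTrig M) (θ v : Fin M → ℝ)
    (i : Fin M) :
    HasDerivAt (fun t => f (update θ i t + v)) (pderiv' i f (θ + v)) (θ i) := by
  simp only [update_add_eq_update_add]
  exact ((coordTrig.differentiable_update hf _ i).differentiableAt.hasDerivAt).comp_add_const _ _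

noncomputable def pascalShift (K : Fin M → ℕ) (f : (Fin M → ℝ) → ℝ) (θ : Fin M → ℝ) : ℝ :=
  1 / 2 ^ (∑ l, K l) * ∑ ω ∈ Fintype.piFinset (fun l => pascalSupport (K l)),
    (∏ l, (pascalD (ω l) (K l) : ℝ)) * f (θ + fun l => π * ((ω l : ℚ) : ℝ))

section pascalShift

variable {f : (Fin M → ℝ) → ℝ}

lemma pascalShift_zero (f : (Fin M → ℝ) → ℝ) : pascalShift 0 f = f := by
  funext θ
  simp [pascalShift, pascalSupport, pascalD, ← Pi.zero_def]

lemma pascalShift_mem_coordTrig (hf : f ∈ coordTrig M) (K : Fin M → ℕ) :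
    pascalShift K f ∈ coordTrig M :=
  Submodule.smul_mem _ _ (coordTrig.sum_mul_comp_add_mem hf _ _ _)

lemma iterate_pderiv'_pascalShift (hf : f ∈ coordTrig M) {K : Fin M → ℕ} {a : Fin M}
    (hK : K a = 0) (n : ℕ) :
    (pderiv' a)^[n] (pascalShift K f) = pascalShift (update K a n) f := by
  funext θ
  have hS : (fun l => pascalSupport (update K a n l))
      = update (fun l => pascalSupport (K l)) a (pascalSupport n) :=
    funext (apply_update (fun _ => pascalSupport) K a n)
  rw [iterate_pderiv'_eq_pascal (pascalShift_mem_coordTrig hf K)]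
  simp only [pascalShift]
  rw [hS, sum_piFinset_update_of_eq_singleton (z := 0) (by simp [hK, pascalSupport]),
    sum_update_univ_of_eq_zero hK, pow_add]
  simp only [mul_sum]
  refine sum_congr rfl fun x _ => sum_congr rfl fun ω hω => ?_
  have hωa : ω a = 0 := by simpa [hK, pascalSupport] using Fintype.mem_piFinset.mp hω a
  have hprod : ∏ l, (pascalD (update ω a x l) (update K a n l) : ℝ)
      = pascalD x n * ∏ l, (pascalD (ω l) (K l) : ℝ) := by
    simp only [apply_update₂ (fun _ y k => (pascalD y k : ℝ))]
    exact prod_update_univ_of_eq_one (by simp [hωa, hK, pascalD]) _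
  have hshift : update θ a (θ a + π * x) + (fun l => π * ω l)
      = θ + fun l => π * (update ω a x l : ℝ) := by
    ext l
    rcases eq_or_ne l a with rfl | hl <;> simp [*]
  rw [hprod, hshift]
  ring

lemma foldr_iterate_pderiv'_eq_pascalShift (hf : f ∈ coordTrig M) (N : Fin M → ℕ)
    {L : List (Fin M)} (hL : L.Nodup) :
    L.foldr (fun i g => (pderiv' i)^[N i] g) f
      = pascalShift (fun l => if l ∈ L then N l else 0) f := by
  induction L with
  | nil => exact (pascalShift_zero f).symm
  | cons a L ih =>
    obtain ⟨ha, hL⟩ := List.nodup_cons.mp hL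
    rw [List.foldr_cons, ih hL, iterate_pderiv'_pascalShift hf (by simp [ha])]
    congr 1
    funext l
    rcases eq_or_ne l a with rfl | hl <;> simp [*]

lemma pdMulti_eq_pascalShift (hf : f ∈ coordTrig M) (N : Fin M → ℕ) :
    pdMulti N f = pascalShift N f := by
  simpa [pdMulti] using foldr_iterate_pderiv'_eq_pascalShift hf N (List.nodup_finRange M)

lemma pderiv'_pascalShift (hf : f ∈ coordTrig M) (K : Fin M → ℕ) (i : Fin M) :
    pderiv' i (pascalShift K f) = pascalShift K (pderiv' i f) := by
  funext θ
  exact ((HasDerivAt.fun_sum fun ω _ =>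
    (hasDerivAt_update_add hf θ _ i).const_mul _).const_mul _).deriv

end pascalShift

/-- Eq. (13): the `(|α|+1)`-th order derivative `∂ᵢ(∂₁^{N(1)} ⋯ ∂_M^{N(M)} C)(θ)` equals
`2^{−|α|} Σ_ω (Π_l d(ω(l), N(l))) ∂ᵢC(θ + π ω)`. -/
theorem higher_order_derivative_as_shifted_gradients {M : ℕ} (C : (Fin M → ℝ) → ℝ)
    (htrig : ∀ (l : Fin M) (θ : Fin M → ℝ), ∃ a b c : ℝ, ∀ t : ℝ,
      C (Function.update θ l t) = a + b * Real.cos t + c * Real.sin t)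
    (N : Fin M → ℕ) (i : Fin M) (θ : Fin M → ℝ) :
    pderiv' i (pdMulti N C) θ =
      (1 / 2 ^ (∑ l, N l)) *
        ∑ ω ∈ Fintype.piFinset (fun l => pascalSupport (N l)),
          (∏ l, (pascalD (ω l) (N l) : ℝ)) *
            pderiv' i C (θ + fun l => Real.pi * ((ω l : ℚ) : ℝ)) := by
  have hC : C ∈ coordTrig M := htrig
  rw [pdMulti_eq_pascalShift hC, pderiv'_pascalShift hC]
  rfl
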